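/- Fix integers n ≥ 2 and 1 ≤ q ≤ n, and a real constant 0 < c < 1/2. Then for every ε > 0 there exists R such that for all integers r ≥ R and all integers p with c·r ≤ p ≤ (1−c)·r one has | ( (1/2) · Σ_I k_{p,q}(π(r,I)) ) / ( C(r−n,p) · μ_{q,n}(r,p) ) − 1 | < ε, where the sum is over all (n−1)-element subsets I of [r] = {1,…,r}. -/

import Mathlib

open MeasureTheory Filter

noncomputable section

/-- `σ_b(a)`: sum over all `b`-element subsets `J` of `{1,…,a}` of the product of elements. -/
def sigmaFn (b a : ℕ) : ℕ := ∑ J ∈ (Finset.Icc 1 a).powersetCard b, ∏ j ∈ J, j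

/-- the `(α+1)`-st smallest element of a finite set of naturals (0-indexed). -/
def nthElt (I : Finset ℕ) (α : ℕ) : ℕ := (I.sort (· ≤ ·)).getD α 0

/-- the product `∏_{α=1}^{q−1} (p+q−i_α)_+ · ∏_{α=q}^{n−1} (i_α−p−q)_+`. -/
def pureNum (n p q : ℕ) (I : Finset ℕ) : ℤ :=
  ∏ α ∈ Finset.range (n - 1),
    if α + 1 < q then max ((p : ℤ) + q - nthElt I α) 0
    else max ((nthElt I α : ℤ) - p - q) 0

/-- the entry `k_{p,q}(π(r,I))` of the pure diagram `π(r,I)`. -/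
def kPure (n r p q : ℕ) (I : Finset ℕ) : ℝ :=
  ((r - n).factorial : ℝ) * (pureNum n p q I : ℝ) /
    (((p + q - 1).factorial : ℝ) * ((r - p - q).factorial : ℝ))

/-- `μ_{q,n}(r,p)`. -/
def muFn (n q r p : ℕ) : ℝ :=
  (1 / 2 ^ n) * ((p : ℝ) ^ (q - 1) * ((r : ℝ) - p - n) ^ (n - q)) /
    ((q - 1).factorial * (n - q).factorial)

/-!
Only sets `I` with exactly `q - 1` elements below `p + q` contribute, and for those the entry
`k_{p,q}(π(r,I))` is, up to a factor independent of `I`, the product of `|p + q - i|` over `i ∈ I`.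
Splitting `I` at `p + q` turns the sum into `σ_{q-1}(p+q-1) · σ_{n-q}(r-p-q)`, so the ratio in the
theorem is a product of two normalised factors `2^b b! σ_b(m+b) m! / ((m+b)! m^b)`, with
`m = p` and `m = r - p - n`, both at least `c r - n`. Each factor tends to `1` as `m → ∞`, because
`b! σ_b(a)` lies between `(a(a+1)/2 - b a)^b` and `(a(a+1)/2)^b`.
-/

open Finset

theorem List.Pairwise.getD_lt_iff_lt_length_filter {α : Type*} [LinearOrder α] {L : List α}
    (hL : L.Pairwise (· < ·)) {i : ℕ} (hi : i < L.length) (d v : α) :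
    L.getD i d < v ↔ i < (L.filter (· < v)).length := by
  induction L generalizing i with
  | nil => simp at hi
  | cons a l ih =>
    obtain ⟨hal, hl⟩ := List.pairwise_cons.mp hL
    by_cases hav : a < v
    · rcases i with _ | i
      · simp [hav]
      · simpa [hav] using ih hl (by simpa using hi)
    · have hnil : l.filter (· < v) = [] := List.filter_eq_nil_iff.mpr fun x hx => by
        simpa using (hal x hx).le.trans' (not_lt.mp hav)
      rcases i with _ | i
      · simp [hav, hnil]
      · have hi' : i < l.length := by simpa using hi
        rw [List.filter_cons_of_neg (by simpa using hav), hnil, List.getD_cons_succ,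
          List.getD_eq_getElem _ _ hi']
        simpa using (not_lt.mp hav).trans (hal _ (List.getElem_mem hi')).le

theorem Finset.card_filter_eq_length_filter_sort {α : Type*} [LinearOrder α] (I : Finset α)
    (P : α → Prop) [DecidablePred P] :
    #(I.filter P) = ((I.sort (· ≤ ·)).filter P).length := by
  rw [← Multiset.coe_card, ← Multiset.filter_coe, Finset.sort_eq]; rfl

theorem prod_eq_prod_range_nthElt {M : Type*} [CommMonoid M] (I : Finset ℕ) (g : ℕ → M) :
    ∏ i ∈ I, g i = ∏ α ∈ range #I, g (nthElt I α) := by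
  rw [← Finset.length_sort (· ≤ ·), Finset.prod_range]
  simp only [nthElt, Fin.is_lt, List.getD_eq_getElem, Fin.prod_univ_fun_getElem]
  rw [← Finset.prod_map_toList]
  exact ((Finset.sort_perm_toList I _).map g).prod_eq.symm

theorem nthElt_lt_iff {I : Finset ℕ} {α : ℕ} (hα : α < #I) (v : ℕ) :
    nthElt I α < v ↔ α < #(I.filter (· < v)) := by
  rw [card_filter_eq_length_filter_sort]
  exact (sortedLT_sort I).pairwise.getD_lt_iff_lt_length_filter (by rwa [length_sort]) 0 v

/- The elements of `I` below `p + q` are its first `t` elements in increasing order; if `t ≠ q - 1`,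
the factor at position `min t (q - 1)` vanishes. -/
theorem pureNum_eq_ite {n p q : ℕ} (hq1 : 1 ≤ q) (hqn : q ≤ n) {I : Finset ℕ} (hI : #I = n - 1) :
    pureNum n p q I =
      if #(I.filter (· < p + q)) = q - 1 then ∏ i ∈ I, |(p : ℤ) + q - i| else 0 := by
  set t := #(I.filter (· < p + q))
  have key : ∀ α < n - 1, nthElt I α < p + q ↔ α < t :=
    fun α hα => nthElt_lt_iff (hI ▸ hα) _
  have ht : t ≤ n - 1 := hI ▸ card_filter_le I _
  unfold pureNum
  split_ifs with h
  · rw [prod_eq_prod_range_nthElt I, hI]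
    refine prod_congr rfl fun α hα => ?_
    have := key α (mem_range.mp hα)
    split_ifs
    · rw [max_eq_left (by omega), abs_of_nonneg (by omega)]
    · rw [max_eq_left (by omega), abs_of_nonpos (by omega)]; ring
  · rcases Nat.lt_or_gt_of_ne h with h | h
    · refine prod_eq_zero (mem_range.mpr (show t < n - 1 by omega)) ?_
      have := key t (by omega)
      rw [if_pos (by omega), max_eq_right (by omega)]
    · refine prod_eq_zero (mem_range.mpr (show q - 1 < n - 1 by omega)) ?_
      have := key (q - 1) (by omega)
      rw [if_neg (by omega), max_eq_right (by omega)]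

theorem Finset.sum_powersetCard_filter_card_eq_mul {α R : Type*} [DecidableEq α] [CommSemiring R]
    (U : Finset α) (P : α → Prop) [DecidablePred P] (f : α → R) (j l : ℕ) :
    ∑ I ∈ (U.powersetCard (j + l)).filter (fun I => #(I.filter P) = j), ∏ i ∈ I, f i =
      (∑ A ∈ (U.filter P).powersetCard j, ∏ i ∈ A, f i) *
        ∑ B ∈ (U.filter (¬ P ·)).powersetCard l, ∏ i ∈ B, f i := by
  have filter_union {A B : Finset α} (hA : A ⊆ U.filter P) (hB : B ⊆ U.filter (¬ P ·)) :
      (A ∪ B).filter P = A ∧ (A ∪ B).filter (¬ P ·) = B := by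
    simp only [subset_iff, mem_filter] at hA hB
    constructor <;> ext x <;> simp only [mem_filter, mem_union] <;> grind
  rw [sum_mul_sum, ← sum_product']
  refine sum_nbij' (fun I => (I.filter P, I.filter (¬ P ·))) (fun AB => AB.1 ∪ AB.2)
    ?_ ?_ (fun I _ => filter_union_filter_not_eq P I) ?_
    fun I _ => (prod_filter_mul_prod_filter_not I P f).symm
  · intro I hI
    simp only [mem_filter, mem_powersetCard, mem_product] at hI ⊢
    have := card_filter_add_card_filter_not (s := I) P
    exact ⟨⟨filter_subset_filter _ hI.1.1, hI.2⟩, filter_subset_filter _ hI.1.1, by omega⟩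
  · rintro ⟨A, B⟩ hAB
    simp only [mem_powersetCard, mem_product] at hAB
    obtain ⟨⟨hA, rfl⟩, hB, rfl⟩ := hAB
    have hAB := filter_union hA hB
    have hdisj : Disjoint A B := hAB.1 ▸ hAB.2 ▸ disjoint_filter_filter_not _ _ _
    simp only [mem_filter, mem_powersetCard, hAB.1, card_union_of_disjoint hdisj, and_true]
    exact union_subset (hA.trans (filter_subset _ _)) (hB.trans (filter_subset _ _))
  · rintro ⟨A, B⟩ hAB
    simp only [mem_powersetCard, mem_product] at hAB
    obtain ⟨h1, h2⟩ := filter_union hAB.1.1 hAB.2.1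
    exact Prod.ext h1 h2

theorem Finset.sum_powersetCard_image_prod {α β R : Type*} [DecidableEq β] [CommSemiring R]
    {S : Finset α} {g : α → β} (hg : Set.InjOn g S) (f : β → R) (k : ℕ) :
    ∑ J ∈ (S.image g).powersetCard k, ∏ j ∈ J, f j = ∑ J ∈ S.powersetCard k, ∏ j ∈ J, f (g j) := by
  rw [← esymm_map_val, ← esymm_map_val, image_val_of_injOn hg, Multiset.map_map]; rfl

theorem natCast_sigmaFn (b a : ℕ) :
    (sigmaFn b a : ℤ) = ∑ J ∈ (Icc 1 a).powersetCard b, ∏ j ∈ J, (j : ℤ) := by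
  push_cast [sigmaFn]; rfl

theorem sum_powersetCard_Ico_prod_abs_sub {s : ℕ} (hs : 1 ≤ s) (k : ℕ) :
    ∑ J ∈ (Ico 1 s).powersetCard k, ∏ i ∈ J, |(s : ℤ) - i| = sigmaFn k (s - 1) := by
  have hinj : Set.InjOn (s - ·) (Ico 1 s : Set ℕ) := fun x hx y hy h => by
    simp only [coe_Ico, Set.mem_Ico] at hx hy; simp only at h; omega
  have himage : (Ico 1 s).image (s - ·) = Icc 1 (s - 1) := by
    rw [Nat.Ico_image_const_sub_eq_Ico hs]; ext; simp only [mem_Ico, mem_Icc]; omega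
  rw [natCast_sigmaFn, ← himage, sum_powersetCard_image_prod hinj]
  refine sum_congr rfl fun J hJ => prod_congr rfl fun i hi => ?_
  have := mem_Ico.mp (mem_powersetCard.mp hJ |>.1 hi)
  rw [Nat.cast_sub this.2.le, abs_of_nonneg (by omega)]

theorem sum_powersetCard_Icc_prod_abs_sub (s r k : ℕ) :
    ∑ J ∈ (Icc s r).powersetCard k, ∏ i ∈ J, |(s : ℤ) - i| = sigmaFn k (r - s) := by
  have himage : (Icc 1 (r - s)).image (· + s) = Ioc s r := by
    ext x; simp only [mem_image, mem_Icc, mem_Ioc]; constructor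
    · rintro ⟨y, hy, rfl⟩; omega
    · intro h; exact ⟨x - s, by omega, by omega⟩
  rw [← sum_subset (powersetCard_mono Ioc_subset_Icc_self), ← himage,
    sum_powersetCard_image_prod (add_left_injective s).injOn, natCast_sigmaFn]
  · refine sum_congr rfl fun J _ => prod_congr rfl fun i _ => ?_
    push_cast; rw [abs_sub_comm, add_sub_cancel_right, abs_of_nonneg (by positivity)]
  · -- a subset of `Icc s r` not inside `Ioc s r` contains `s`, whose factor is `0`
    intro J hJ hJ'
    obtain ⟨i, hi, hi'⟩ := not_subset.mp (mt (fun h => mem_powersetCard.mpr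
      ⟨h, (mem_powersetCard.mp hJ).2⟩) hJ')
    refine prod_eq_zero hi ?_
    have := mem_Icc.mp ((mem_powersetCard.mp hJ).1 hi)
    have : i = s := by simp only [mem_Ioc] at hi'; omega
    simp [this]

theorem sum_pureNum {n p q r : ℕ} (hq1 : 1 ≤ q) (hqn : q ≤ n) (hr : p + q ≤ r) :
    ∑ I ∈ (Icc 1 r).powersetCard (n - 1), pureNum n p q I =
      (sigmaFn (q - 1) (p + q - 1) : ℤ) * sigmaFn (n - q) (r - p - q) := by
  have hlower : (Icc 1 r).filter (· < p + q) = Ico 1 (p + q) := by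
    ext; simp only [mem_filter, mem_Icc, mem_Ico]; omega
  have hupper : (Icc 1 r).filter (¬ · < p + q) = Icc (p + q) r := by
    ext; simp only [mem_filter, mem_Icc]; omega
  rw [sum_congr rfl fun I hI => pureNum_eq_ite hq1 hqn (mem_powersetCard.mp hI).2, ← sum_filter,
    show n - 1 = (q - 1) + (n - q) by omega, sum_powersetCard_filter_card_eq_mul, hlower, hupper]
  simp only [← Nat.cast_add]
  rw [sum_powersetCard_Ico_prod_abs_sub (by omega), sum_powersetCard_Icc_prod_abs_sub, Nat.sub_sub]

theorem sigmaFn_zero_left (a : ℕ) : sigmaFn 0 a = 1 := by simp [sigmaFn]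

theorem sigmaFn_succ_zero (b : ℕ) : sigmaFn (b + 1) 0 = 0 := by simp [sigmaFn]

theorem sigmaFn_succ_succ (b a : ℕ) :
    sigmaFn (b + 1) (a + 1) = sigmaFn (b + 1) a + (a + 1) * sigmaFn b a := by
  have hnot : a + 1 ∉ Icc 1 a := by simp
  have hJ : ∀ J ∈ (Icc 1 a).powersetCard b, a + 1 ∉ J := fun J hJ h =>
    hnot ((mem_powersetCard.mp hJ).1 h)
  have hIcc : Icc 1 (a + 1) = insert (a + 1) (Icc 1 a) := by
    ext; simp only [mem_Icc, mem_insert]; omega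
  rw [sigmaFn, hIcc, powersetCard_succ_insert hnot, sum_union, sum_image, sigmaFn, sigmaFn, mul_sum]
  · exact congrArg _ (sum_congr rfl fun J hJ' => prod_insert (hJ J hJ'))
  · exact fun J hJ' K hK' h => by
      rw [← erase_insert (hJ J hJ'), ← erase_insert (hJ K hK'), h]
  · refine disjoint_left.mpr fun J hJ' hJ'' => ?_
    obtain ⟨K, -, rfl⟩ := mem_image.mp hJ''
    exact hnot ((mem_powersetCard.mp hJ').1 (mem_insert_self _ _))

section MeanValue

variable {R : Type*} [CommRing R] [LinearOrder R] [IsStrictOrderedRing R] {u w : R}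

theorem mul_pow_le_pow_succ_sub_pow_succ (hu : 0 ≤ u) (huw : u ≤ w) (k : ℕ) :
    (k + 1) * (w - u) * u ^ k ≤ w ^ (k + 1) - u ^ (k + 1) := by
  have hsum : (k + 1) * u ^ k ≤ ∑ i ∈ range (k + 1), w ^ i * u ^ (k - i) := by
    simpa using card_nsmul_le_sum (range (k + 1)) _ (u ^ k) fun i hi => by
      rw [← pow_mul_pow_sub u (Nat.le_of_lt_succ (mem_range.mp hi))]
      gcongr
  rw [← geom_sum₂_mul, Nat.add_sub_cancel, mul_right_comm]
  exact mul_le_mul_of_nonneg_right hsum (sub_nonneg.mpr huw)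

theorem pow_succ_sub_pow_succ_le_mul_pow (hu : 0 ≤ u) (huw : u ≤ w) (k : ℕ) :
    w ^ (k + 1) - u ^ (k + 1) ≤ (k + 1) * (w - u) * w ^ k := by
  simpa [abs_of_nonneg (sub_nonneg.mpr huw), abs_of_nonneg hu, abs_of_nonneg (hu.trans huw),
    max_eq_left huw, mul_comm, mul_left_comm] using
    (le_abs_self _).trans (abs_pow_sub_pow_le w u (k + 1))

end MeanValue

theorem factorial_mul_sigmaFn_le (a b : ℕ) :
    (b.factorial : ℝ) * sigmaFn b a ≤ ((a : ℝ) * (a + 1) / 2) ^ b := by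
  induction a generalizing b with
  | zero => rcases b with _ | b <;> simp [sigmaFn_zero_left, sigmaFn_succ_zero]
  | succ a ih =>
    rcases b with _ | b
    · simp [sigmaFn_zero_left]
    set T : ℝ := (a : ℝ) * (a + 1) / 2
    have key := mul_pow_le_pow_succ_sub_pow_succ (by positivity : 0 ≤ T)
      (le_add_of_nonneg_right (by positivity : (0 : ℝ) ≤ a + 1)) b
    have h1 := ih (b + 1)
    have h2 := mul_le_mul_of_nonneg_left (ih b) (by positivity : (0 : ℝ) ≤ (b + 1) * (a + 1))
    rw [Nat.factorial_succ] at h1 ⊢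
    push_cast at h1 ⊢
    rw [sigmaFn_succ_succ]
    push_cast
    linear_combination h1 + h2 + key

theorem le_factorial_mul_sigmaFn {a b : ℕ} (h : 2 * b ≤ a + 1) :
    ((a : ℝ) * (a + 1) / 2 - b * a) ^ b ≤ (b.factorial : ℝ) * sigmaFn b a := by
  induction a generalizing b with
  | zero =>
    obtain rfl : b = 0 := by omega
    simp [sigmaFn_zero_left]
  | succ a ih =>
    rcases b with _ | b
    · simp [sigmaFn_zero_left]
    have h2 := mul_le_mul_of_nonneg_left (ih (b := b) (by omega))
      (by positivity : (0 : ℝ) ≤ (b + 1) * (a + 1))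
    rw [Nat.factorial_succ, sigmaFn_succ_succ]
    push_cast
    rcases (show a = 2 * b ∨ 2 * b + 1 ≤ a by omega) with rfl | hab
    · refine le_of_eq_of_le ?_ (by positivity)
      rw [pow_eq_zero_iff (by omega)]; push_cast; ring
    set u : ℝ := (a : ℝ) * (a + 1) / 2 - (b + 1) * a
    set v : ℝ := (a : ℝ) * (a + 1) / 2 - b * a
    have hab' : (2 * b + 1 : ℝ) ≤ a := by exact_mod_cast hab
    have hu : 0 ≤ u := by
      rw [show u = a * (a - (2 * b + 1)) / 2 by ring]
      have := sub_nonneg.mpr hab'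
      positivity
    have hw : ((a : ℝ) + 1) * (a + 1 + 1) / 2 - (b + 1) * (a + 1) = u + (a - b) := by ring
    have h1 := ih (b := b + 1) (by omega)
    rw [Nat.factorial_succ] at h1
    push_cast at h1
    have hmvt := pow_succ_sub_pow_succ_le_mul_pow hu (by linarith : u ≤ u + (a - b)) b
    have hwv : (u + (a - b)) ^ b ≤ v ^ b := pow_le_pow_left₀ (by linarith) (by linarith) b
    rw [hw]
    calc (u + (a - b)) ^ (b + 1)
        ≤ u ^ (b + 1) + (b + 1) * (a - b) * (u + (a - b)) ^ b := by linarith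
      _ ≤ u ^ (b + 1) + (b + 1) * (a + 1) * v ^ b := by
        have := pow_nonneg (by linarith : 0 ≤ u + (a - b)) b
        have : (b + 1) * (a - b) ≤ ((b : ℝ) + 1) * (a + 1) := by nlinarith
        gcongr
      _ ≤ _ := by linear_combination h1 + h2

/-- Normalised so that it tends to `1`: `b! σ_b(m+b) ~ (m²/2)^b` and `(m+b)!/m! ~ m^b`. -/
def sigmaRatio (b m : ℕ) : ℝ :=
  2 ^ b * (b.factorial * sigmaFn b (m + b)) * m.factorial / ((m + b).factorial * m ^ b)

theorem one_add_div_pow_le_sigmaRatio {b m : ℕ} (hm : 0 < m) (hb : b ≤ m) :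
    (1 + (1 - b) / m : ℝ) ^ b ≤ sigmaRatio b m := by
  have hm' : (0 : ℝ) < m := by exact_mod_cast hm
  have hb' : (b : ℝ) ≤ m := by exact_mod_cast hb
  have hbase : (1 + (1 - b) / m : ℝ) * m = m + 1 - b := by field_simp; ring
  have hbase0 : (0 : ℝ) ≤ 1 + (1 - b) / m := by
    rw [← mul_le_mul_iff_of_pos_right hm', hbase]; linarith
  have hfact : ((m + b).factorial : ℝ) ≤ m.factorial * (m + b) ^ b := by
    rw [← Nat.factorial_mul_ascFactorial]
    exact_mod_cast Nat.mul_le_mul_left _ (Nat.ascFactorial_le_pow_add m b)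
  have hσ := le_factorial_mul_sigmaFn (a := m + b) (b := b) (by omega)
  push_cast at hσ
  rw [sigmaRatio, le_div_iff₀ (by positivity)]
  calc (1 + (1 - b) / m : ℝ) ^ b * ((m + b).factorial * m ^ b)
      ≤ (1 + (1 - b) / m : ℝ) ^ b * (m.factorial * (m + b) ^ b * m ^ b) := by gcongr
    _ = 2 ^ b * ((m + b) * (m + b + 1) / 2 - b * (m + b) : ℝ) ^ b * m.factorial := by
        rw [← mul_pow, show (2 : ℝ) * ((m + b) * (m + b + 1) / 2 - b * (m + b)) =
          (1 + (1 - b) / m) * m * (m + b) by rw [hbase]; ring, mul_pow, mul_pow]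
        ring
    _ ≤ 2 ^ b * (b.factorial * sigmaFn b (m + b)) * m.factorial := by gcongr

theorem sigmaRatio_le_one_add_div_mul_pow {b m : ℕ} (hm : 0 < m) :
    sigmaRatio b m ≤ ((1 + b / m) * (1 + (b + 1) / m) : ℝ) ^ b := by
  have hm' : (0 : ℝ) < m := by exact_mod_cast hm
  have hfact : (m.factorial : ℝ) * m ^ b ≤ (m + b).factorial := by
    exact_mod_cast (Nat.mul_le_mul_left _ (Nat.pow_le_pow_left m.le_succ b)).trans
      Nat.factorial_mul_pow_le_factorial
  have hσ := factorial_mul_sigmaFn_le (m + b) b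
  push_cast at hσ
  rw [sigmaRatio, div_le_iff₀ (by positivity)]
  calc 2 ^ b * (b.factorial * sigmaFn b (m + b)) * (m.factorial : ℝ)
      ≤ 2 ^ b * ((m + b) * (m + b + 1) / 2 : ℝ) ^ b * m.factorial := by gcongr
    _ = ((1 + b / m) * (1 + (b + 1) / m) : ℝ) ^ b * (m.factorial * m ^ b * m ^ b) := by
        rw [← mul_pow, show (2 : ℝ) * ((m + b) * (m + b + 1) / 2) =
          (1 + b / m) * (1 + (b + 1) / m) * m * m by field_simp; ring, mul_pow, mul_pow]
        ring
    _ ≤ ((1 + b / m) * (1 + (b + 1) / m) : ℝ) ^ b * ((m + b).factorial * m ^ b) := by gcongr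

open Topology in
theorem tendsto_sigmaRatio (b : ℕ) : Tendsto (sigmaRatio b) atTop (𝓝 1) := by
  have hlim : ∀ x y : ℝ, Tendsto (fun m : ℕ => ((1 + x / m) * (1 + y / m)) ^ b) atTop (𝓝 1) :=
    fun x y => by
      simpa using (((tendsto_const_div_atTop_nhds_zero_nat x).const_add 1).mul
        ((tendsto_const_div_atTop_nhds_zero_nat y).const_add 1)).pow b
  refine tendsto_of_tendsto_of_tendsto_of_le_of_le' (by simpa using hlim (1 - b) 0) (hlim b (b + 1))
    ?_ ?_
  · filter_upwards [eventually_ge_atTop (max b 1)] with m hm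
    simpa using one_add_div_pow_le_sigmaRatio (b := b) (by omega) (le_of_max_le_left hm)
  · filter_upwards [eventually_ge_atTop 1] with m hm
    exact sigmaRatio_le_one_add_div_mul_pow hm

theorem exists_abs_sigmaRatio_mul_sigmaRatio_sub_one_lt (b₁ b₂ : ℕ) {ε : ℝ} (hε : 0 < ε) :
    ∃ M : ℕ, ∀ m₁ m₂, M ≤ m₁ → M ≤ m₂ → |sigmaRatio b₁ m₁ * sigmaRatio b₂ m₂ - 1| < ε := by
  have h := ((tendsto_sigmaRatio b₁).comp tendsto_fst).mul
    ((tendsto_sigmaRatio b₂).comp (tendsto_snd (f := (atTop : Filter ℕ))))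
  rw [mul_one] at h
  have := Metric.tendsto_nhds.mp h ε hε
  rw [prod_atTop_atTop_eq, eventually_atTop_prod_self] at this
  simpa [Real.dist_eq] using this

theorem sum_kPure_div_choose_mul_muFn {n p q r : ℕ} (hq1 : 1 ≤ q) (hqn : q ≤ n)
    (hr : p + n < r) :
    ((1 / 2 : ℝ) * ∑ I ∈ (Icc 1 r).powersetCard (n - 1), kPure n r p q I) /
        (((r - n).choose p : ℝ) * muFn n q r p) =
      sigmaRatio (q - 1) p * sigmaRatio (n - q) (r - p - n) := by
  have hsum := sum_pureNum (p := p) (r := r) hq1 hqn (by omega)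
  simp only [kPure, ← sum_div, ← mul_sum]
  rw [← Int.cast_sum, hsum, Nat.cast_choose ℝ (show p ≤ r - n by omega)]
  obtain ⟨b₁, rfl⟩ : ∃ b, q = b + 1 := ⟨q - 1, by omega⟩
  obtain ⟨b₂, rfl⟩ : ∃ b, n = b₁ + 1 + b := ⟨n - (b₁ + 1), by omega⟩
  obtain ⟨m, rfl⟩ : ∃ m, r = p + (b₁ + 1 + b₂) + m := ⟨r - (p + (b₁ + 1 + b₂)), by omega⟩
  have e1 : p + (b₁ + 1) - 1 = p + b₁ := by omega
  have e2 : p + (b₁ + 1 + b₂) + m - p - (b₁ + 1) = m + b₂ := by omega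
  have e3 : p + (b₁ + 1 + b₂) + m - (b₁ + 1 + b₂) = p + m := by omega
  have e4 : p + (b₁ + 1 + b₂) + m - p - (b₁ + 1 + b₂) = m := by omega
  have e5 : b₁ + 1 + b₂ - (b₁ + 1) = b₂ := by omega
  have hcast : ((p + (b₁ + 1 + b₂) + m : ℕ) : ℝ) - p - ((b₁ + 1 + b₂ : ℕ) : ℝ) = m := by
    push_cast; ring
  simp only [e1, e2, e3, e4, e5, Nat.add_sub_cancel, Nat.add_sub_cancel_left, muFn, sigmaRatio,
    hcast]
  push_cast
  field_simp
  ring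

theorem stmt5_general (n q : ℕ) (hq1 : 1 ≤ q) (hqn : q ≤ n)
    (c : ℝ) (hc0 : 0 < c) :
    ∀ ε : ℝ, 0 < ε → ∃ R : ℕ, ∀ r : ℕ, R ≤ r → ∀ p : ℕ,
      c * r ≤ (p : ℝ) → (p : ℝ) ≤ (1 - c) * r →
      |((1 / 2 : ℝ) * ∑ I ∈ (Finset.Icc 1 r).powersetCard (n - 1), kPure n r p q I) /
          (((r - n).choose p : ℝ) * muFn n q r p) - 1| < ε := by
  intro ε hε
  obtain ⟨M, hM⟩ := exists_abs_sigmaRatio_mul_sigmaRatio_sub_one_lt (q - 1) (n - q) hε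
  refine ⟨⌈(M + n + 1) / c⌉₊, fun r hr p hp₁ hp₂ => ?_⟩
  have hcr : (M + n + 1 : ℝ) ≤ c * r := by
    rw [← div_le_iff₀' hc0]
    exact (Nat.le_ceil _).trans (by exact_mod_cast hr)
  have hp : M + n + 1 ≤ p := by exact_mod_cast hcr.trans hp₁
  have hrp : p + (M + n + 1) ≤ r := by
    exact_mod_cast (show (p + (M + n + 1) : ℝ) ≤ r by linarith)
  rw [sum_kPure_div_choose_mul_muFn hq1 hqn (by omega)]
  exact hM _ _ (by omega) (by omega)

theorem stmt5 (n q : ℕ) (hn : 2 ≤ n) (hq1 : 1 ≤ q) (hqn : q ≤ n)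
    (c : ℝ) (hc0 : 0 < c) (hc : c < 1 / 2) :
    ∀ ε : ℝ, 0 < ε → ∃ R : ℕ, ∀ r : ℕ, R ≤ r → ∀ p : ℕ,
      c * r ≤ (p : ℝ) → (p : ℝ) ≤ (1 - c) * r →
      |((1 / 2 : ℝ) * ∑ I ∈ (Finset.Icc 1 r).powersetCard (n - 1), kPure n r p q I) /
          (((r - n).choose p : ℝ) * muFn n q r p) - 1| < ε :=
  stmt5_general n q hq1 hqn c hc0
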